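/- arXiv:1212.2351 — 5 statements merged into one kernel-verified Lean document; each statement's English description precedes it below -/
import Mathlib

section
/- Let M be a k-vector space which is a left H-module via (f, m) ↦ f·m, and which carries a linear map α : M → H ⊗ M satisfying the left comodule axioms (Δ ⊗ id_M)∘α = (id_H ⊗ α)∘α and (ε ⊗ id_M)∘α = id_M; write α(m) = m_(-1) ⊗ m_(0). Define λ : M → H* ⊗ M by λ(m) = Σ_{j=1}^n e^j ⊗ (e_j · m). Then the Yetter-Drinfeld condition — α(f·m) = f_(1) m_(-1) S(f_(3)) ⊗ (f_(2) · m_(0)) for all f ∈ H and m ∈ M, where f_(1) ⊗ f_(2) ⊗ f_(3) = (Δ ⊗ id)Δ(f) — holds if and only if (Ad(w) ⊗ id_M) ∘ (id_H ⊗ λ) ∘ α = (σ ⊗ id_M) ∘ (id_{H*} ⊗ α) ∘ λ as linear maps M → H ⊗ H* ⊗ M, where σ : H* ⊗ H → H ⊗ H* is the flip map and Ad(w)(z) = w z w^{-1} is conjugation by w in the tensor product algebra H ⊗ H*. -/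
open scoped TensorProduct

noncomputable section

variable (k H : Type*) [Field k] [Ring H] [HopfAlgebra k H]

/-- The convolution product on the linear dual `H*` of `H`, as a linear map
`H* ⊗ H* → H*`: it sends `x ⊗ y` to `a ↦ x(a_(1)) y(a_(2))`. -/
def convL : Module.Dual k H ⊗[k] Module.Dual k H →ₗ[k] Module.Dual k H :=
  LinearMap.lcomp k k (Coalgebra.comul (R := k) (A := H)) ∘ₗ
    TensorProduct.dualDistrib k H H

/-- The multiplication of the tensor product algebra `H ⊗ H*`, where `H*` carries the
convolution product:  `(f ⊗ x)(g ⊗ y) = fg ⊗ (x · y)`. -/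
def mulD : (H ⊗[k] Module.Dual k H) ⊗[k] (H ⊗[k] Module.Dual k H) →ₗ[k]
    H ⊗[k] Module.Dual k H :=
  TensorProduct.map (LinearMap.mul' k H) (convL k H) ∘ₗ
    (TensorProduct.tensorTensorTensorComm k H (Module.Dual k H) H
      (Module.Dual k H)).toLinearMap

variable {k H}

/-- The element `w = Σ_j e_j ⊗ e^j ∈ H ⊗ H*`. -/
def wElem {n : ℕ} (b : Module.Basis (Fin n) k H) : H ⊗[k] Module.Dual k H :=
  ∑ j : Fin n, b j ⊗ₜ[k] b.coord j

/-- The element `w⁻¹ = (S ⊗ id)(w) = Σ_j S(e_j) ⊗ e^j ∈ H ⊗ H*`. -/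
def wElemInv {n : ℕ} (b : Module.Basis (Fin n) k H) : H ⊗[k] Module.Dual k H :=
  ∑ j : Fin n, HopfAlgebra.antipode (R := k) (b j) ⊗ₜ[k] b.coord j

/-- Conjugation `Ad(w)(z) = w z w⁻¹` by `w` in the tensor product algebra `H ⊗ H*`. -/
def adW {n : ℕ} (b : Module.Basis (Fin n) k H) :
    H ⊗[k] Module.Dual k H →ₗ[k] H ⊗[k] Module.Dual k H :=
  mulD k H ∘ₗ
    TensorProduct.mk k (H ⊗[k] Module.Dual k H) (H ⊗[k] Module.Dual k H) (wElem b) ∘ₗ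
    mulD k H ∘ₗ
    (TensorProduct.mk k (H ⊗[k] Module.Dual k H) (H ⊗[k] Module.Dual k H)).flip
      (wElemInv b)

/-- The map `(f₁ ⊗ f₂) ⊗ c ↦ (f₁ c) ⊗ f₂`. -/
def mulOuter : (H ⊗[k] H) ⊗[k] H →ₗ[k] H ⊗[k] H :=
  TensorProduct.map (LinearMap.mul' k H) (LinearMap.id : H →ₗ[k] H) ∘ₗ
    (TensorProduct.assoc k H H H).symm.toLinearMap ∘ₗ
    TensorProduct.map (LinearMap.id : H →ₗ[k] H) (TensorProduct.comm k H H).toLinearMap ∘ₗ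
    (TensorProduct.assoc k H H H).toLinearMap

/-- The right hand side of the Yetter-Drinfeld condition, as a linear map `H ⊗ M → H ⊗ M`:
`f ⊗ m ↦ f_(1) m_(-1) S(f_(3)) ⊗ (f_(2) · m_(0))`, where `α(m) = m_(-1) ⊗ m_(0)` and
`f_(1) ⊗ f_(2) ⊗ f_(3) = (Δ ⊗ id)Δ(f)`. -/
def sweedlerYD {M : Type*} [AddCommGroup M] [Module k M]
    (act : H →ₗ[k] M →ₗ[k] M) (a : M →ₗ[k] H ⊗[k] M) : H ⊗[k] M →ₗ[k] H ⊗[k] M :=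
  TensorProduct.map (LinearMap.mul' k H) (TensorProduct.lift act) ∘ₗ
    (TensorProduct.tensorTensorTensorComm k H H H M).toLinearMap ∘ₗ
    TensorProduct.map mulOuter (LinearMap.id : H ⊗[k] M →ₗ[k] H ⊗[k] M) ∘ₗ
    (TensorProduct.tensorTensorTensorComm k (H ⊗[k] H) H H M).toLinearMap ∘ₗ
    TensorProduct.map
      (TensorProduct.map (LinearMap.id : H ⊗[k] H →ₗ[k] H ⊗[k] H)
          (HopfAlgebra.antipode (R := k)) ∘ₗ
        TensorProduct.map (Coalgebra.comul (R := k) (A := H)) (LinearMap.id : H →ₗ[k] H) ∘ₗ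
        Coalgebra.comul (R := k) (A := H))
      a

/-!
Evaluating the `H*`-factor of `H ⊗ H* ⊗ M` at all `g ∈ H` separates points, because
`z = Σ_j (z evaluated at e_j) ⊗ e^j`. So both sides of the compatibility identity may be compared
after evaluation at an arbitrary `g`. There the right-hand side collapses to
`Σ_j e^j(g) α(e_j·m) = α(g·m)`. On the left, `(e^i · x · e^l)(g) = e^i(g_(1)) x(g_(2)) e^l(g_(3))`,
so the basis sums in `Ad(w)(h ⊗ x) = Σ_{i,l} e_i h S(e_l) ⊗ e^i · x · e^l` collapse to
`x(g_(2)) g_(1) h S(g_(3))`, and the left-hand side becomes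
`g_(1) m_(-1) S(g_(3)) ⊗ g_(2)·m_(0)`, the right-hand side of the Yetter-Drinfeld condition.
-/

section Slice

open TensorProduct

variable {R V N W M : Type*} [CommSemiring R] [AddCommMonoid V] [Module R V] [AddCommMonoid N]
  [Module R N] [AddCommMonoid W] [Module R W] [AddCommMonoid M] [Module R M]

def sliceRight (φ : N →ₗ[R] R) : V ⊗[R] N →ₗ[R] V :=
  (TensorProduct.rid R V).toLinearMap ∘ₗ φ.lTensor V

@[simp]
lemma sliceRight_tmul (φ : N →ₗ[R] R) (v : V) (x : N) : sliceRight φ (v ⊗ₜ x) = φ x • v := by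
  simp [sliceRight]

lemma rTensor_sliceRight_eval_comm_assoc (g : W) (x : Module.Dual R W) (t : W ⊗[R] M) :
    (sliceRight (Module.Dual.eval R W g)).rTensor M
      (TensorProduct.map (TensorProduct.comm R (Module.Dual R W) W).toLinearMap LinearMap.id
        ((TensorProduct.assoc R (Module.Dual R W) W M).symm (x ⊗ₜ t))) = x g • t := by
  induction t using TensorProduct.induction_on with
  | zero => simp
  | tmul w m => simp [smul_tmul']
  | add t₁ t₂ h₁ h₂ => simp only [tmul_add, map_add, h₁, h₂, smul_add]

variable {ι : Type*} [Fintype ι]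

lemma sum_sliceRight_coord_tmul (b : Module.Basis ι R W) (φ : W →ₗ[R] N) (t : V ⊗[R] W) :
    ∑ j, sliceRight (b.coord j) t ⊗ₜ[R] φ (b j) = φ.lTensor V t := by
  induction t using TensorProduct.induction_on with
  | zero => simp
  | tmul v w =>
    simp_rw [sliceRight_tmul, LinearMap.lTensor_tmul, smul_tmul, ← tmul_sum, ← map_smul,
      ← map_sum, b.coord_apply, b.sum_repr]
  | add t₁ t₂ h₁ h₂ => simp only [map_add, add_tmul, Finset.sum_add_distrib, h₁, h₂]

lemma sum_rTensor_sliceRight_eval (b : Module.Basis ι R W)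
    (z : (V ⊗[R] Module.Dual R W) ⊗[R] M) :
    ∑ j, ((TensorProduct.mk R V (Module.Dual R W)).flip (b.coord j)).rTensor M
      ((sliceRight (Module.Dual.eval R W (b j))).rTensor M z) = z := by
  suffices h : ∑ j, ((TensorProduct.mk R V (Module.Dual R W)).flip (b.coord j)).rTensor M ∘ₗ
      (sliceRight (Module.Dual.eval R W (b j))).rTensor M = LinearMap.id by
    simpa using LinearMap.congr_fun h z
  refine TensorProduct.ext_threefold fun v x m ↦ ?_
  simp only [LinearMap.coe_sum, Finset.sum_apply, LinearMap.comp_apply, LinearMap.id_apply,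
    LinearMap.rTensor_tmul, sliceRight_tmul, LinearMap.flip_apply, mk_apply,
    Module.Dual.eval_apply, ← sum_tmul]
  simp_rw [smul_tmul, ← tmul_sum, b.sum_dual_apply_smul_coord]

lemma eq_of_forall_rTensor_sliceRight_eval_eq (b : Module.Basis ι R W)
    {z z' : (V ⊗[R] Module.Dual R W) ⊗[R] M}
    (h : ∀ g : W, (sliceRight (Module.Dual.eval R W g)).rTensor M z =
      (sliceRight (Module.Dual.eval R W g)).rTensor M z') : z = z' := by
  rw [← sum_rTensor_sliceRight_eval b z, ← sum_rTensor_sliceRight_eval b z']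
  simp only [h]

end Slice

section Hopf

open TensorProduct

variable {k H : Type*} [Field k] [Ring H] [HopfAlgebra k H]

local notation "Δ" => Coalgebra.comul (R := k) (A := H)
local notation "𝒮" => HopfAlgebra.antipode k (A := H)

lemma mulD_tmul (h f : H) (x y : Module.Dual k H) :
    mulD k H ((h ⊗ₜ x) ⊗ₜ (f ⊗ₜ y)) = (h * f) ⊗ₜ convL k H (x ⊗ₜ y) := by
  simp [mulD]

lemma adW_tmul {n : ℕ} (b : Module.Basis (Fin n) k H) (h : H) (x : Module.Dual k H) :
    adW b (h ⊗ₜ x) = ∑ i, ∑ l, (b i * (h * 𝒮 (b l))) ⊗ₜ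
      convL k H (b.coord i ⊗ₜ convL k H (x ⊗ₜ b.coord l)) := by
  simp only [adW, wElem, wElemInv, LinearMap.comp_apply, LinearMap.flip_apply, mk_apply,
    LinearMap.sum_apply, map_sum, mulD_tmul]
  exact Finset.sum_comm

lemma convL_convL_apply (x y z : Module.Dual k H) (g : H) :
    convL k H (x ⊗ₜ convL k H (y ⊗ₜ z)) g =
      dualDistrib k H (H ⊗[k] H) (x ⊗ₜ dualDistrib k H H (y ⊗ₜ z))
        (LinearMap.lTensor H Δ (Δ g)) := by
  change dualDistrib k H H (x ⊗ₜ (dualDistrib k H H (y ⊗ₜ z) ∘ₗ Δ)) (Δ g) = _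
  induction Δ g using TensorProduct.induction_on with
  | zero => simp
  | tmul c d => simp
  | add t₁ t₂ h₁ h₂ => simp only [map_add, h₁, h₂]

/-- In Sweedler notation, `sandwich h ((Δ ⊗ id) Δ f) = f_(1) h S(f_(3)) ⊗ f_(2)`. -/
def sandwich (h : H) : (H ⊗[k] H) ⊗[k] H →ₗ[k] H ⊗[k] H :=
  mulOuter ∘ₗ (LinearMap.mulLeft k h ∘ₗ 𝒮).lTensor (H ⊗[k] H)

@[simp]
lemma sandwich_tmul (h c u v : H) : sandwich h ((c ⊗ₜ u) ⊗ₜ v) = (c * (h * 𝒮 v)) ⊗ₜ[k] u := by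
  simp [sandwich, mulOuter]

lemma sum_coord_smul_mul_antipode {n : ℕ} (b : Module.Basis (Fin n) k H) (h : H)
    (x : Module.Dual k H) (t : H ⊗[k] (H ⊗[k] H)) :
    ∑ i, ∑ l, dualDistrib k H (H ⊗[k] H) (b.coord i ⊗ₜ dualDistrib k H H (x ⊗ₜ b.coord l)) t •
      (b i * (h * 𝒮 (b l))) = sliceRight x (sandwich h ((TensorProduct.assoc k H H H).symm t)) := by
  induction t using TensorProduct.induction_on with
  | zero => simp
  | tmul c t =>
    induction t using TensorProduct.induction_on with
    | zero => simp
    | tmul u v =>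
      simp only [dualDistrib_apply, b.coord_apply, assoc_symm_tmul, sandwich_tmul,
        sliceRight_tmul]
      conv_rhs => rw [← b.sum_repr c, ← b.sum_repr v]
      simp only [map_sum, map_smul, Finset.sum_mul, Finset.mul_sum, Finset.smul_sum,
        smul_mul_assoc, mul_smul_comm, smul_smul]
      rw [Finset.sum_comm]
      exact Finset.sum_congr rfl fun i _ ↦ Finset.sum_congr rfl fun l _ ↦ by congr 1; ring
    | add t₁ t₂ h₁ h₂ => simp only [tmul_add, map_add, add_smul, Finset.sum_add_distrib, h₁, h₂]
  | add t₁ t₂ h₁ h₂ => simp only [map_add, add_smul, Finset.sum_add_distrib, h₁, h₂]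

lemma sliceRight_eval_adW {n : ℕ} (b : Module.Basis (Fin n) k H) (g h : H)
    (x : Module.Dual k H) :
    sliceRight (Module.Dual.eval k H g) (adW b (h ⊗ₜ x)) =
      sliceRight x (sandwich h (LinearMap.rTensor H Δ (Δ g))) := by
  simp only [adW_tmul, map_sum, sliceRight_tmul, Module.Dual.eval_apply, convL_convL_apply,
    sum_coord_smul_mul_antipode, Coalgebra.coassoc_symm_apply]

variable {M : Type*} [AddCommGroup M] [Module k M]

def sandwichAction (act : H →ₗ[k] M →ₗ[k] M) :
    ((H ⊗[k] H) ⊗[k] H) ⊗[k] (H ⊗[k] M) →ₗ[k] H ⊗[k] M :=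
  TensorProduct.map (LinearMap.mul' k H) (TensorProduct.lift act) ∘ₗ
    (TensorProduct.tensorTensorTensorComm k H H H M).toLinearMap ∘ₗ
    TensorProduct.map mulOuter LinearMap.id ∘ₗ
    (TensorProduct.tensorTensorTensorComm k (H ⊗[k] H) H H M).toLinearMap ∘ₗ
    TensorProduct.map (LinearMap.lTensor (H ⊗[k] H) 𝒮) LinearMap.id

lemma sweedlerYD_tmul (act : H →ₗ[k] M →ₗ[k] M) (a : M →ₗ[k] H ⊗[k] M) (f : H) (m : M) :
    sweedlerYD act a (f ⊗ₜ m) = sandwichAction act (LinearMap.rTensor H Δ (Δ f) ⊗ₜ a m) :=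
  rfl

lemma sandwichAction_tmul (act : H →ₗ[k] M →ₗ[k] M) (T : (H ⊗[k] H) ⊗[k] H) (h : H) (m : M) :
    sandwichAction act (T ⊗ₜ (h ⊗ₜ m)) = (act.flip m).lTensor H (sandwich h T) := by
  have h_comp : sandwichAction act ∘ₗ (TensorProduct.mk k _ _).flip (h ⊗ₜ m) =
      (act.flip m).lTensor H ∘ₗ sandwich h :=
    TensorProduct.ext_threefold fun c u v ↦ by simp [sandwichAction, mulOuter, mul_assoc]
  exact LinearMap.congr_fun h_comp T

variable {n : ℕ} (b : Module.Basis (Fin n) k H) (act : H →ₗ[k] M →ₗ[k] M)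

def dualCoaction : M →ₗ[k] Module.Dual k H ⊗[k] M :=
  ∑ j, TensorProduct.mk k (Module.Dual k H) M (b.coord j) ∘ₗ act (b j)

lemma dualCoaction_apply (m : M) :
    dualCoaction b act m = ∑ j, b.coord j ⊗ₜ act (b j) m := by
  simp [dualCoaction]

variable (a : M →ₗ[k] H ⊗[k] M)

lemma rTensor_sliceRight_eval_adW_comp (g : H) (m : M) :
    (sliceRight (Module.Dual.eval k H g)).rTensor M
      ((TensorProduct.map (adW b) LinearMap.id ∘ₗ
        (TensorProduct.assoc k H (Module.Dual k H) M).symm.toLinearMap ∘ₗ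
        TensorProduct.map LinearMap.id (dualCoaction b act) ∘ₗ a) m) =
      sweedlerYD act a (g ⊗ₜ m) := by
  rw [sweedlerYD_tmul, LinearMap.comp_apply, LinearMap.comp_apply, LinearMap.comp_apply]
  induction a m using TensorProduct.induction_on with
  | zero => simp
  | tmul h m₀ =>
    simp only [dualCoaction_apply, tmul_sum, map_sum, LinearEquiv.coe_coe, assoc_symm_tmul,
      map_tmul, LinearMap.id_apply, LinearMap.rTensor_tmul, sliceRight_eval_adW,
      sandwichAction_tmul]
    exact sum_sliceRight_coord_tmul b (act.flip m₀) _
  | add t₁ t₂ h₁ h₂ => simp only [map_add, tmul_add, h₁, h₂]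

lemma rTensor_sliceRight_eval_comm_comp (g : H) (m : M) :
    (sliceRight (Module.Dual.eval k H g)).rTensor M
      ((TensorProduct.map (TensorProduct.comm k (Module.Dual k H) H).toLinearMap LinearMap.id ∘ₗ
        (TensorProduct.assoc k (Module.Dual k H) H M).symm.toLinearMap ∘ₗ
        TensorProduct.map LinearMap.id a ∘ₗ dualCoaction b act) m) =
      a (act g m) := by
  simp only [LinearMap.comp_apply, dualCoaction_apply, map_sum, LinearEquiv.coe_coe, map_tmul,
    LinearMap.id_apply, rTensor_sliceRight_eval_comm_assoc]
  conv_rhs => rw [← b.sum_repr g]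
  simp only [map_sum, map_smul, LinearMap.sum_apply, LinearMap.smul_apply, b.coord_apply]

end Hopf

theorem yetter_drinfeld_iff_drinfeld_double_compatibility_general
    {k H : Type*} [Field k] [Ring H] [HopfAlgebra k H] {n : ℕ} (b : Module.Basis (Fin n) k H)
    {M : Type*} [AddCommGroup M] [Module k M]
    (act : H →ₗ[k] M →ₗ[k] M)
    (a : M →ₗ[k] H ⊗[k] M)
    (lam : M →ₗ[k] Module.Dual k H ⊗[k] M)
    (hlam : lam = ∑ j : Fin n,
      TensorProduct.mk k (Module.Dual k H) M (b.coord j) ∘ₗ act (b j)) :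
    (∀ (f : H) (m : M), a (act f m) = sweedlerYD act a (f ⊗ₜ[k] m))
      ↔
    (TensorProduct.map (adW b) (LinearMap.id : M →ₗ[k] M) ∘ₗ
        (TensorProduct.assoc k H (Module.Dual k H) M).symm.toLinearMap ∘ₗ
        TensorProduct.map (LinearMap.id : H →ₗ[k] H) lam ∘ₗ a
      = TensorProduct.map (TensorProduct.comm k (Module.Dual k H) H).toLinearMap
            (LinearMap.id : M →ₗ[k] M) ∘ₗ
          (TensorProduct.assoc k (Module.Dual k H) H M).symm.toLinearMap ∘ₗ
          TensorProduct.map (LinearMap.id : Module.Dual k H →ₗ[k] Module.Dual k H) a ∘ₗ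
          lam) := by
  obtain rfl : lam = dualCoaction b act := hlam
  constructor
  · intro hyd
    refine LinearMap.ext fun m ↦ eq_of_forall_rTensor_sliceRight_eval_eq b fun g ↦ ?_
    rw [rTensor_sliceRight_eval_adW_comp, rTensor_sliceRight_eval_comm_comp, hyd]
  · intro hcompat f m
    have h := congrArg ((sliceRight (Module.Dual.eval k H f)).rTensor M)
      (LinearMap.congr_fun hcompat m)
    rwa [rTensor_sliceRight_eval_adW_comp, rTensor_sliceRight_eval_comm_comp, eq_comm] at h

/-- Let `H` be a finite dimensional Hopf algebra over a field `k` with basis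
`e_1, …, e_n`, let `M` be a left `H`-module which is also a left `H`-comodule via
`α : M → H ⊗ M`, and define `λ : M → H* ⊗ M` by `λ(m) = Σ_j e^j ⊗ (e_j · m)`.  Then the
Yetter-Drinfeld condition `α(f·m) = f_(1) m_(-1) S(f_(3)) ⊗ (f_(2) · m_(0))` (for all
`f ∈ H`, `m ∈ M`) holds if and only if
`(Ad(w) ⊗ id_M) ∘ (id_H ⊗ λ) ∘ α = (σ ⊗ id_M) ∘ (id_{H*} ⊗ α) ∘ λ` as linear maps
`M → H ⊗ H* ⊗ M`, where `σ : H* ⊗ H → H ⊗ H*` is the flip and `Ad(w)` is conjugation by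
`w = Σ_j e_j ⊗ e^j`. -/
theorem yetter_drinfeld_iff_drinfeld_double_compatibility
    {k H : Type*} [Field k] [Ring H] [HopfAlgebra k H] {n : ℕ} (b : Module.Basis (Fin n) k H)
    {M : Type*} [AddCommGroup M] [Module k M]
    (act : H →ₗ[k] M →ₗ[k] M)
    (hact_one : act 1 = LinearMap.id)
    (hact_mul : ∀ f g : H, act (f * g) = act f ∘ₗ act g)
    (a : M →ₗ[k] H ⊗[k] M)
    (hcoassoc :
      (TensorProduct.assoc k H H M).toLinearMap ∘ₗ
          TensorProduct.map (Coalgebra.comul (R := k) (A := H))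
            (LinearMap.id : M →ₗ[k] M) ∘ₗ a
        = TensorProduct.map (LinearMap.id : H →ₗ[k] H) a ∘ₗ a)
    (hcounit :
      (TensorProduct.lid k M).toLinearMap ∘ₗ
          TensorProduct.map (Coalgebra.counit (R := k) (A := H))
            (LinearMap.id : M →ₗ[k] M) ∘ₗ a
        = LinearMap.id)
    (lam : M →ₗ[k] Module.Dual k H ⊗[k] M)
    (hlam : lam = ∑ j : Fin n,
      TensorProduct.mk k (Module.Dual k H) M (b.coord j) ∘ₗ act (b j)) :
    (∀ (f : H) (m : M), a (act f m) = sweedlerYD act a (f ⊗ₜ[k] m))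
      ↔
    (TensorProduct.map (adW b) (LinearMap.id : M →ₗ[k] M) ∘ₗ
        (TensorProduct.assoc k H (Module.Dual k H) M).symm.toLinearMap ∘ₗ
        TensorProduct.map (LinearMap.id : H →ₗ[k] H) lam ∘ₗ a
      = TensorProduct.map (TensorProduct.comm k (Module.Dual k H) H).toLinearMap
            (LinearMap.id : M →ₗ[k] M) ∘ₗ
          (TensorProduct.assoc k (Module.Dual k H) H M).symm.toLinearMap ∘ₗ
          TensorProduct.map (LinearMap.id : Module.Dual k H →ₗ[k] Module.Dual k H) a ∘ₗ
          lam) :=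
  yetter_drinfeld_iff_drinfeld_double_compatibility_general b act a lam hlam

end
end

section
/- The comultiplication Δ_D : D_H → D_H ⊗ D_H and the counit ε_D : D_H → k are unital algebra homomorphisms, where D_H = H ⊗ H* carries the tensor product algebra structure and D_H ⊗ D_H the tensor product algebra structure of two copies of D_H; hence D_H is a bialgebra. -/
/-!
`D_H` is the tensor product algebra `H ⊗ H*`, so once it is transported to Mathlib's tensor product
algebra `H ⊗ A`, with `A` an isomorphic copy of the convolution algebra `H*`, it suffices to write
`Δ_D` and `ε_D` as composites of algebra maps:

* `w` is a unit with inverse `Σ S(e_j) ⊗ e^j`: the map `H ⊗ H* → End(H)`, `f ⊗ x ↦ x(-) f`, is an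
  injective algebra map for the convolution product on `End(H)` and sends these two elements to
  `id` and `S`, which are convolution inverses; so `Ad(w)` is an algebra automorphism;
* `Δ̂` is an algebra map: the injective algebra map `H* ⊗ H* → (H ⊗ H)*` sends `Δ̂ x` to
  `x ∘ m^op`, and the transpose of the coalgebra map `m^op : H ⊗ H → H` is multiplicative;
* `ε_D = ε ⊗ ev₁`, and evaluation at the group-like element `1` is multiplicative on `H*`.
-/

open scoped TensorProduct

noncomputable section

variable (k H : Type*) [Field k] [Ring H] [HopfAlgebra k H]

/-- The unit `1 ⊗ ε` of the tensor product algebra `D_H = H ⊗ H*`. -/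
def oneD : H ⊗[k] Module.Dual k H :=
  (1 : H) ⊗ₜ[k] (Coalgebra.counit (R := k) (A := H))

/-- The counit `ε_D(f ⊗ x) = ε(f) x(1)` of the Drinfeld codouble `D_H = H ⊗ H*`. -/
def epsD : H ⊗[k] Module.Dual k H →ₗ[k] k :=
  LinearMap.mul' k k ∘ₗ
    TensorProduct.map (Coalgebra.counit (R := k) (A := H))
      (LinearMap.applyₗ (1 : H) : Module.Dual k H →ₗ[k] k)

variable {k H}

/-- The comultiplication `Δ_D = (id ⊗ σ ⊗ id) ∘ (id ⊗ Ad(w) ⊗ id) ∘ (Δ ⊗ Δ̂)` of the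
Drinfeld codouble `D_H = H ⊗ H*`, where `Δ̂` is the comultiplication of `(H*)^cop` and
`σ` is the flip map. -/
def deltaD {n : ℕ} (b : Module.Basis (Fin n) k H)
    (Δhat : Module.Dual k H →ₗ[k] Module.Dual k H ⊗[k] Module.Dual k H) :
    H ⊗[k] Module.Dual k H →ₗ[k]
      (H ⊗[k] Module.Dual k H) ⊗[k] (H ⊗[k] Module.Dual k H) :=
  (TensorProduct.assoc k H (Module.Dual k H) (H ⊗[k] Module.Dual k H)).symm.toLinearMap ∘ₗ
    TensorProduct.map (LinearMap.id : H →ₗ[k] H)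
      (TensorProduct.assoc k (Module.Dual k H) H (Module.Dual k H)).toLinearMap ∘ₗ
    TensorProduct.map (LinearMap.id : H →ₗ[k] H)
      (TensorProduct.map (TensorProduct.comm k H (Module.Dual k H)).toLinearMap
        (LinearMap.id : Module.Dual k H →ₗ[k] Module.Dual k H)) ∘ₗ
    TensorProduct.map (LinearMap.id : H →ₗ[k] H)
      (TensorProduct.map (adW b)
        (LinearMap.id : Module.Dual k H →ₗ[k] Module.Dual k H)) ∘ₗ
    TensorProduct.map (LinearMap.id : H →ₗ[k] H)
      (TensorProduct.assoc k H (Module.Dual k H) (Module.Dual k H)).symm.toLinearMap ∘ₗ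
    (TensorProduct.assoc k H H (Module.Dual k H ⊗[k] Module.Dual k H)).toLinearMap ∘ₗ
    TensorProduct.map (Coalgebra.comul (R := k) (A := H)) Δhat

variable (k H)

/-- The multiplication of the tensor product algebra `D_H ⊗ D_H` of two copies of the
tensor product algebra `D_H = H ⊗ H*`: `(d₁ ⊗ d₂)(d₃ ⊗ d₄) = d₁d₃ ⊗ d₂d₄`. -/
def mulDD : ((H ⊗[k] Module.Dual k H) ⊗[k] (H ⊗[k] Module.Dual k H)) ⊗[k]
      ((H ⊗[k] Module.Dual k H) ⊗[k] (H ⊗[k] Module.Dual k H)) →ₗ[k]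
    (H ⊗[k] Module.Dual k H) ⊗[k] (H ⊗[k] Module.Dual k H) :=
  TensorProduct.map (mulD k H) (mulD k H) ∘ₗ
    (TensorProduct.tensorTensorTensorComm k (H ⊗[k] Module.Dual k H)
      (H ⊗[k] Module.Dual k H) (H ⊗[k] Module.Dual k H)
      (H ⊗[k] Module.Dual k H)).toLinearMap

namespace DrinfeldCodouble

open TensorProduct WithConv Coalgebra

section DualDistrib

variable {R M N : Type*} [CommSemiring R] [AddCommMonoid M] [Module R M]
  [AddCommMonoid N] [Module R N]

lemma dualDistrib_eq_mul'_comp_map (x : Module.Dual R M) (y : Module.Dual R N) :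
    dualDistrib R M N (x ⊗ₜ y) = LinearMap.mul' R R ∘ₗ map x y := by
  ext; simp

variable [Coalgebra R M] [Coalgebra R N]

lemma dualDistrib_convMul (x x' : WithConv (Module.Dual R M)) (y y' : WithConv (Module.Dual R N)) :
    toConv (dualDistrib R M N ((x * x').ofConv ⊗ₜ (y * y').ofConv)) =
      toConv (dualDistrib R M N (x.ofConv ⊗ₜ y.ofConv)) *
        toConv (dualDistrib R M N (x'.ofConv ⊗ₜ y'.ofConv)) := by
  have hcomp := LinearMap.algHom_comp_convMul_distrib (Algebra.TensorProduct.lmul' R (S := R))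
    (toConv (map x.ofConv y.ofConv)) (toConv (map x'.ofConv y'.ofConv))
  rw [TensorProduct.map_convMul_map] at hcomp
  simpa only [dualDistrib_eq_mul'_comp_map, Algebra.TensorProduct.lmul'_toLinearMap,
    toConv_ofConv] using congrArg toConv hcomp

variable (R M N) in
def dualDistribAlgHom :
    WithConv (Module.Dual R M) ⊗[R] WithConv (Module.Dual R N) →ₐ[R]
      WithConv (Module.Dual R (M ⊗[R] N)) :=
  Algebra.TensorProduct.algHomOfLinearMapTensorProduct
    ((WithConv.linearEquiv R _).symm.toLinearMap ∘ₗ dualDistrib R M N ∘ₗ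
      map (WithConv.linearEquiv R _).toLinearMap (WithConv.linearEquiv R _).toLinearMap)
    (fun _ _ _ _ ↦ dualDistrib_convMul _ _ _ _)
    (by ext; simp [mul_comm])

@[simp]
lemma dualDistribAlgHom_tmul (x : WithConv (Module.Dual R M)) (y : WithConv (Module.Dual R N)) :
    dualDistribAlgHom R M N (x ⊗ₜ y) = toConv (dualDistrib R M N (x.ofConv ⊗ₜ y.ofConv)) :=
  rfl

lemma dualDistribAlgHom_injective {ι κ : Type*} [Fintype ι] [DecidableEq ι] [Fintype κ]
    [DecidableEq κ] (b : Module.Basis ι R M) (c : Module.Basis κ R N) :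
    Function.Injective (dualDistribAlgHom R M N) :=
  (WithConv.linearEquiv R _).symm.injective.comp <|
    (dualDistribEquivOfBasis b c).injective.comp
      (TensorProduct.congr (WithConv.linearEquiv R _) (WithConv.linearEquiv R _)).injective

end DualDistrib

section DualComul

variable {R A ι : Type*} [CommSemiring R] [Semiring A] [Bialgebra R A] [Fintype ι] [DecidableEq ι]

variable (R A) in
def mulOpCoalgHom : A ⊗[R] A →ₗc[R] A :=
  (Bialgebra.mulCoalgHom R A).comp (Bialgebra.TensorProduct.comm R A A : A ⊗[R] A →ₗc[R] A ⊗[R] A)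

@[simp] lemma mulOpCoalgHom_tmul (a c : A) : mulOpCoalgHom R A (a ⊗ₜ c) = c * a := rfl

variable (Δhat : Module.Dual R A →ₗ[R] Module.Dual R A ⊗[R] Module.Dual R A)

def convDualComul :
    WithConv (Module.Dual R A) →ₗ[R] WithConv (Module.Dual R A) ⊗[R] WithConv (Module.Dual R A) :=
  (TensorProduct.congr (WithConv.linearEquiv R _).symm
      (WithConv.linearEquiv R _).symm).toLinearMap ∘ₗ
    Δhat ∘ₗ (WithConv.linearEquiv R _).toLinearMap

variable {Δhat}

lemma dualDistribAlgHom_convDualComul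
    (hΔhat : ∀ (x : Module.Dual R A) (a c : A), dualDistrib R A A (Δhat x) (a ⊗ₜ c) = x (c * a))
    (x : WithConv (Module.Dual R A)) :
    dualDistribAlgHom R A A (convDualComul Δhat x) =
      toConv (x.ofConv ∘ₗ (mulOpCoalgHom R A).toLinearMap) := by
  have hdualDistrib : ∀ u, dualDistribAlgHom R A A
      (TensorProduct.congr (WithConv.linearEquiv R _).symm (WithConv.linearEquiv R _).symm u) =
        toConv (dualDistrib R A A u) := by
    intro u
    induction u using TensorProduct.induction_on with
    | zero => simp
    | tmul y z => rfl
    | add u v hu hv => simp only [map_add, hu, hv, toConv_add]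
  refine (hdualDistrib _).trans (congrArg toConv (TensorProduct.ext' fun a c ↦ ?_))
  simp [hΔhat]

def dualComulAlgHom (b : Module.Basis ι R A)
    (hΔhat : ∀ (x : Module.Dual R A) (a c : A), dualDistrib R A A (Δhat x) (a ⊗ₜ c) = x (c * a)) :
    WithConv (Module.Dual R A) →ₐ[R] WithConv (Module.Dual R A) ⊗[R] WithConv (Module.Dual R A) :=
  AlgHom.ofLinearMap (convDualComul Δhat)
    (dualDistribAlgHom_injective b b <| by
      rw [dualDistribAlgHom_convDualComul hΔhat, Algebra.TensorProduct.one_def,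
        dualDistribAlgHom_tmul]
      ext
      simp [mul_comm])
    (fun x y ↦ dualDistribAlgHom_injective b b <| by
      rw [map_mul (dualDistribAlgHom R A A), dualDistribAlgHom_convDualComul hΔhat,
        dualDistribAlgHom_convDualComul hΔhat, dualDistribAlgHom_convDualComul hΔhat,
        LinearMap.convMul_comp_coalgHom_distrib])

end DualComul

section DualTensorConv

variable {R A C ι : Type*} [CommSemiring R] [Semiring A] [Algebra R A] [AddCommMonoid C]
  [Module R C] [Coalgebra R C]

variable (R A C) in
def dualTensorConvAlgHom : A ⊗[R] WithConv (Module.Dual R C) →ₐ[R] WithConv (C →ₗ[R] A) :=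
  Algebra.TensorProduct.algHomOfLinearMapTensorProduct
    ((WithConv.linearEquiv R _).symm.toLinearMap ∘ₗ dualTensorHom R C A ∘ₗ
      (TensorProduct.comm R A _).toLinearMap ∘ₗ
      LinearMap.lTensor A (WithConv.linearEquiv R _).toLinearMap)
    (fun a a' x x' ↦ by
      ext c
      simp [-LinearMap.convMul_apply, (ℛ R c).convMul_apply, Finset.sum_smul, smul_smul, mul_comm])
    (by ext; simp [Algebra.algebraMap_eq_smul_one])

@[simp]
lemma dualTensorConvAlgHom_tmul (a : A) (x : WithConv (Module.Dual R C)) :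
    dualTensorConvAlgHom R A C (a ⊗ₜ x) = toConv (x.ofConv.smulRight a) :=
  rfl

lemma dualTensorConvAlgHom_sum_basis [Fintype ι] (b : Module.Basis ι R C) (f : C →ₗ[R] A) :
    dualTensorConvAlgHom R A C (∑ i, f (b i) ⊗ₜ toConv (b.coord i)) = toConv f := by
  ext c
  conv_rhs => rw [← b.sum_repr c, map_sum]
  simp

lemma dualTensorConvAlgHom_injective [Fintype ι] [DecidableEq ι] (b : Module.Basis ι R C) :
    Function.Injective (dualTensorConvAlgHom R A C) :=
  (WithConv.linearEquiv R _).symm.injective.comp <|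
    (dualTensorHomEquivOfBasis (N := A) b).injective.comp <|
      (TensorProduct.comm R A _).injective.comp
        (LinearEquiv.lTensor A (WithConv.linearEquiv R _)).injective

end DualTensorConv

section GroupLikeEval

variable {R A C : Type*} [CommSemiring R] [Semiring A] [Algebra R A] [AddCommMonoid C]
  [Module R C] [Coalgebra R C] {g : C}

def evalAlgHom (hg : IsGroupLikeElem R g) : WithConv (C →ₗ[R] A) →ₐ[R] A :=
  AlgHom.ofLinearMap (LinearMap.applyₗ g ∘ₗ (WithConv.linearEquiv R _).toLinearMap)
    (by simp [hg.counit_eq_one]) (fun x y ↦ by simp [hg.comul_eq_tmul_self])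

@[simp] lemma evalAlgHom_apply (hg : IsGroupLikeElem R g) (x : WithConv (C →ₗ[R] A)) :
    evalAlgHom hg x = x g := rfl

end GroupLikeEval

section CodoubleComul

variable {R B A : Type*} [CommSemiring R] [Semiring B] [Algebra R B] [Semiring A] [Algebra R A]

-- The formula `(id ⊗ σ ⊗ id) ∘ (id ⊗ Ad(w) ⊗ id) ∘ (ΔB ⊗ ΔA)` of `deltaD`, associators included.
open Algebra.TensorProduct in
def codoubleComul (ΔB : B →ₐ[R] B ⊗[R] B) (ΔA : A →ₐ[R] A ⊗[R] A) (w : (B ⊗[R] A)ˣ) :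
    B ⊗[R] A →ₐ[R] (B ⊗[R] A) ⊗[R] (B ⊗[R] A) :=
  (Algebra.TensorProduct.assoc R R R B A (B ⊗[R] A)).symm.toAlgHom.comp <|
    (map (.id R B) (Algebra.TensorProduct.assoc R R R A B A).toAlgHom).comp <|
    (map (.id R B) (map (Algebra.TensorProduct.comm R B A).toAlgHom (.id R A))).comp <|
    (map (.id R B) (map (MulSemiringAction.toAlgHom R _ (ConjAct.toConjAct w)) (.id R A))).comp <|
    (map (.id R B) (Algebra.TensorProduct.assoc R R R B A A).symm.toAlgHom).comp <|
    (Algebra.TensorProduct.assoc R R R B B (A ⊗[R] A)).toAlgHom.comp (map ΔB ΔA)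

end CodoubleComul

section Transport

variable {k H}

lemma convL_tmul (x y : Module.Dual k H) :
    convL k H (x ⊗ₜ y) = (toConv x * toConv y).ofConv := by
  ext a
  simp [convL, dualDistrib_eq_mul'_comp_map]

-- `A` is an abstract copy of the convolution algebra `WithConv (Module.Dual k H)`: the `Module`
-- instance with which `H ⊗ WithConv (Module.Dual k H)` elaborates is not reducibly the one under
-- the convolution algebra structure, and this defeats instance search on the tensor product.
variable {A : Type*} [Semiring A] [Algebra k A] (ψ : WithConv (Module.Dual k H) ≃ₐ[k] A)

def convEquiv : H ⊗[k] Module.Dual k H ≃ₗ[k] H ⊗[k] A :=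
  LinearEquiv.lTensor H (WithConv.linearEquiv k _).symm ≪≫ₗ
    (Algebra.TensorProduct.congr AlgEquiv.refl ψ).toLinearEquiv

@[simp] lemma convEquiv_tmul (f : H) (x : Module.Dual k H) :
    convEquiv ψ (f ⊗ₜ x) = f ⊗ₜ ψ (toConv x) := rfl

lemma convEquiv_comp_mulD :
    (convEquiv ψ).toLinearMap ∘ₗ mulD k H =
      LinearMap.mul' k (H ⊗[k] A) ∘ₗ map (convEquiv ψ).toLinearMap (convEquiv ψ).toLinearMap := by
  ext f x g y
  simp [mulD, convL_tmul]

lemma convEquiv_mulD (z z' : H ⊗[k] Module.Dual k H) :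
    convEquiv ψ (mulD k H (z ⊗ₜ z')) = convEquiv ψ z * convEquiv ψ z' :=
  LinearMap.congr_fun (convEquiv_comp_mulD ψ) (z ⊗ₜ z')

lemma convEquiv_oneD : convEquiv ψ (oneD k H) = 1 := by
  rw [oneD, convEquiv_tmul, Algebra.TensorProduct.one_def]
  exact congrArg _ (map_one ψ)

lemma congr_convEquiv_comp_mulDD :
    (congr (convEquiv ψ) (convEquiv ψ)).toLinearMap ∘ₗ mulDD k H =
      LinearMap.mul' k _ ∘ₗ
        map (congr (convEquiv ψ) (convEquiv ψ)).toLinearMap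
          (congr (convEquiv ψ) (convEquiv ψ)).toLinearMap := by
  ext
  simp [mulDD, mulD, convL_tmul]

lemma congr_convEquiv_mulDD (u u' : (H ⊗[k] Module.Dual k H) ⊗[k] (H ⊗[k] Module.Dual k H)) :
    congr (convEquiv ψ) (convEquiv ψ) (mulDD k H (u ⊗ₜ u')) =
      congr (convEquiv ψ) (convEquiv ψ) u * congr (convEquiv ψ) (convEquiv ψ) u' :=
  LinearMap.congr_fun (congr_convEquiv_comp_mulDD ψ) (u ⊗ₜ u')

lemma epsD_eq_productMap (z : H ⊗[k] Module.Dual k H) :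
    epsD k H z = Algebra.TensorProduct.productMap (Bialgebra.counitAlgHom k H)
      ((evalAlgHom (A := k) IsGroupLikeElem.one).comp ψ.symm.toAlgHom) (convEquiv ψ z) := by
  induction z using TensorProduct.induction_on with
  | zero => simp
  | add z z' hz hz' => simp only [map_add, hz, hz']
  | tmul f x => simp [epsD]

def endAlgHom : H ⊗[k] A →ₐ[k] WithConv (H →ₗ[k] H) :=
  (dualTensorConvAlgHom k H H).comp (Algebra.TensorProduct.congr AlgEquiv.refl ψ).symm.toAlgHom

lemma endAlgHom_injective {ι : Type*} [Fintype ι] [DecidableEq ι] (b : Module.Basis ι k H) :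
    Function.Injective (endAlgHom ψ) :=
  (dualTensorConvAlgHom_injective b).comp
    (Algebra.TensorProduct.congr AlgEquiv.refl ψ).symm.injective

variable {n : ℕ} (b : Module.Basis (Fin n) k H)

lemma endAlgHom_convEquiv_sum_basis (f : H →ₗ[k] H) :
    endAlgHom ψ (convEquiv ψ (∑ j, f (b j) ⊗ₜ b.coord j)) = toConv f := by
  simpa [endAlgHom, convEquiv] using dualTensorConvAlgHom_sum_basis b f

lemma endAlgHom_convEquiv_wElem : endAlgHom ψ (convEquiv ψ (wElem b)) = toConv LinearMap.id :=
  endAlgHom_convEquiv_sum_basis ψ b LinearMap.id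

lemma endAlgHom_convEquiv_wElemInv :
    endAlgHom ψ (convEquiv ψ (wElemInv b)) = toConv (HopfAlgebra.antipode k) :=
  endAlgHom_convEquiv_sum_basis ψ b (HopfAlgebra.antipode k)

def wUnit : (H ⊗[k] A)ˣ where
  val := convEquiv ψ (wElem b)
  inv := convEquiv ψ (wElemInv b)
  val_inv := endAlgHom_injective ψ b <| by
    rw [map_mul, map_one, endAlgHom_convEquiv_wElem, endAlgHom_convEquiv_wElemInv,
      LinearMap.id_mul_antipode]
  inv_val := endAlgHom_injective ψ b <| by
    rw [map_mul, map_one, endAlgHom_convEquiv_wElem, endAlgHom_convEquiv_wElemInv,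
      LinearMap.antipode_mul_id]

lemma convEquiv_adW (z : H ⊗[k] Module.Dual k H) :
    convEquiv ψ (adW b z) = ConjAct.toConjAct (wUnit ψ b) • convEquiv ψ z := by
  rw [ConjAct.units_smul_def]
  change convEquiv ψ (mulD k H (wElem b ⊗ₜ mulD k H (z ⊗ₜ wElemInv b))) = _
  rw [convEquiv_mulD, convEquiv_mulD, ← mul_assoc]
  rfl

variable {Δhat : Module.Dual k H →ₗ[k] Module.Dual k H ⊗[k] Module.Dual k H}

lemma congr_convEquiv_deltaD
    (hΔhat : ∀ (x : Module.Dual k H) (a c : H), dualDistrib k H H (Δhat x) (a ⊗ₜ c) = x (c * a))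
    (z : H ⊗[k] Module.Dual k H) :
    congr (convEquiv ψ) (convEquiv ψ) (deltaD b Δhat z) =
      codoubleComul (Bialgebra.comulAlgHom k H)
        ((Algebra.TensorProduct.congr ψ ψ).toAlgHom.comp
          ((dualComulAlgHom b hΔhat).comp ψ.symm.toAlgHom))
        (wUnit ψ b) (convEquiv ψ z) := by
  induction z using TensorProduct.induction_on with
  | zero => simp
  | add z z' hz hz' => simp only [map_add, hz, hz']
  | tmul f x =>
    simp only [deltaD, codoubleComul, dualComulAlgHom, convDualComul, LinearMap.coe_comp,
      Function.comp_apply, map_tmul, AlgHom.coe_comp, AlgHom.ofLinearMap_apply, convEquiv_tmul,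
      LinearEquiv.coe_coe, Algebra.TensorProduct.map_tmul, Bialgebra.comulAlgHom_apply,
      WithConv.linearEquiv_apply, AlgEquiv.coe_toAlgHom, AlgEquiv.symm_apply_apply]
    generalize comul (R := k) f = u
    generalize Δhat x = v
    induction u using TensorProduct.induction_on with
    | zero => simp
    | add u u' hu hu' => simp only [add_tmul, map_add, hu, hu']
    | tmul f₁ f₂ =>
      induction v using TensorProduct.induction_on with
      | zero => simp
      | add v v' hv hv' => simp only [tmul_add, map_add, hv, hv']
      | tmul x₁ x₂ =>
        simp only [assoc_tmul, map_tmul, LinearMap.id_coe, id_eq, LinearEquiv.coe_coe,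
          assoc_symm_tmul, congr_tmul, symm_linearEquiv_apply, Algebra.TensorProduct.congr_apply,
          Algebra.TensorProduct.map_tmul, AlgEquiv.coe_toAlgHom, Algebra.TensorProduct.assoc_tmul,
          AlgHom.coe_id, Algebra.TensorProduct.assoc_symm_tmul, MulSemiringAction.toAlgHom_apply]
        rw [← convEquiv_tmul, ← convEquiv_adW]
        generalize adW b (f₂ ⊗ₜ x₁) = z
        induction z using TensorProduct.induction_on with
        | zero => simp
        | add z z' hz hz' => simp only [add_tmul, tmul_add, map_add, hz, hz']
        | tmul g y => simp

end Transport

end DrinfeldCodouble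

open DrinfeldCodouble

/-- The comultiplication `Δ_D : D_H → D_H ⊗ D_H` and the counit
`ε_D : D_H → k` of the Drinfeld codouble are unital algebra homomorphisms, where
`D_H = H ⊗ H*` carries the tensor product algebra structure and `D_H ⊗ D_H` the tensor
product algebra structure of two copies of `D_H`; hence `D_H` is a bialgebra.  Here `Δ̂`
is the comultiplication of `(H*)^cop`, characterized by `Δ̂(x)(a ⊗ b) = x(ba)`. -/
theorem drinfeld_codouble_bialgebra
    {k H : Type*} [Field k] [Ring H] [HopfAlgebra k H] {n : ℕ} (b : Module.Basis (Fin n) k H)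
    (Δhat : Module.Dual k H →ₗ[k] Module.Dual k H ⊗[k] Module.Dual k H)
    (hΔhat : ∀ (x : Module.Dual k H) (a c : H),
      TensorProduct.dualDistrib k H H (Δhat x) (a ⊗ₜ[k] c) = x (c * a)) :
    (∀ z z' : H ⊗[k] Module.Dual k H,
      deltaD b Δhat (mulD k H (z ⊗ₜ[k] z'))
        = mulDD k H (deltaD b Δhat z ⊗ₜ[k] deltaD b Δhat z')) ∧
    (deltaD b Δhat (oneD k H) = oneD k H ⊗ₜ[k] oneD k H) ∧
    (∀ z z' : H ⊗[k] Module.Dual k H,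
      epsD k H (mulD k H (z ⊗ₜ[k] z')) = epsD k H z * epsD k H z') ∧
    (epsD k H (oneD k H) = 1) := by
  let ψ := AlgEquiv.refl (R := k) (A₁ := WithConv (Module.Dual k H))
  have hinj := (TensorProduct.congr (convEquiv ψ) (convEquiv ψ)).injective
  refine ⟨fun z z' ↦ hinj ?_, hinj ?_, fun z z' ↦ ?_, ?_⟩
  · rw [congr_convEquiv_mulDD, congr_convEquiv_deltaD ψ b hΔhat, congr_convEquiv_deltaD ψ b hΔhat,
      congr_convEquiv_deltaD ψ b hΔhat, convEquiv_mulD, map_mul]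
  · rw [congr_convEquiv_deltaD ψ b hΔhat, convEquiv_oneD, map_one, TensorProduct.congr_tmul,
      convEquiv_oneD, Algebra.TensorProduct.one_def]
  · rw [epsD_eq_productMap ψ, epsD_eq_productMap ψ, epsD_eq_productMap ψ, convEquiv_mulD, map_mul]
  · simp [epsD, oneD]
end
end

section
/- Let C be a monoidal category, let (A, β) be a monoid object in the Drinfeld center Z(C) with multiplication μ_A : A ⊗ A → A and unit η_A : 𝟙 → A, and let (B, μ_B, η_B) be a monoid object in C. Then the object A ⊗ B of C, equipped with the multiplication (A ⊗ B) ⊗ (A ⊗ B) → A ⊗ B given (up to the associativity isomorphisms of C) by (μ_A ⊗ μ_B) ∘ (id_A ⊗ (β_B)^{-1} ⊗ id_B), where β_B : A ⊗ B ≅ B ⊗ A is the half-braiding of A at B, and with unit given (up to a unitor of C) by η_A ⊗ η_B, is a monoid object in C (i.e. this multiplication is associative and the unit axioms hold). -/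
/-!
Up to coherence isomorphisms the multiplication of `A ⊗ B` is `μ_A ⊗ μ_B` preceded by moving the
middle factor `B` past `A` with `β_B⁻¹`. The left unit law follows from the unit laws of `A` and
`B` because `β⁻¹` is natural and `β_𝟙` is a composite of unitors; the right unit law because
`η_A` is a morphism in the center, so it commutes with `β⁻¹`. For associativity both bracketings
are rewritten into one shape: shuffle `(A B)(A B)(A B)` into `(A A A)(B B B)` with three inverse
half-braidings, then multiply. On the left bracketing this uses naturality of `β⁻¹` at `μ_B` and
the hexagon law for `β_{B ⊗ B}`; on the right bracketing it uses that `μ_A` is a morphism in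
the center.
-/

open CategoryTheory MonoidalCategory

noncomputable section

variable {C : Type*} [Category C] [MonoidalCategory C]

/-- The multiplication on `A ⊗ B`, where `(A, β)` is a monoid object in the Drinfeld center
`Z(C)` and `B` is a monoid object in `C`: up to the associativity isomorphisms of `C` it is
`(μ_A ⊗ μ_B) ∘ (id_A ⊗ (β_B)⁻¹ ⊗ id_B)`, where `β_B : A ⊗ B ≅ B ⊗ A` is the half-braiding
of `A` at `B`. -/
def braidedTensorMul (M : Mon (Center C)) (B : Mon C) :
    (M.X.1 ⊗ B.X) ⊗ (M.X.1 ⊗ B.X) ⟶ M.X.1 ⊗ B.X :=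
  (α_ M.X.1 B.X (M.X.1 ⊗ B.X)).hom ≫
    (M.X.1 ◁ (α_ B.X M.X.1 B.X).inv) ≫
    (M.X.1 ◁ ((M.X.2.β B.X).inv ▷ B.X)) ≫
    (M.X.1 ◁ (α_ M.X.1 B.X B.X).hom) ≫
    (α_ M.X.1 M.X.1 (B.X ⊗ B.X)).inv ≫
    ((MonObj.mul (X := M.X)).f ⊗ₘ MonObj.mul (X := B.X))

/-- The unit of `A ⊗ B`: up to a unitor of `C` it is `η_A ⊗ η_B`. -/
def braidedTensorOne (M : Mon (Center C)) (B : Mon C) : 𝟙_ C ⟶ M.X.1 ⊗ B.X :=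
  (λ_ (𝟙_ C)).inv ≫ ((MonObj.one (X := M.X)).f ⊗ₘ MonObj.one (X := B.X))

open MonObj

lemma CategoryTheory.Center.Hom.comm_inv {X Y : Center C} (f : X ⟶ Y) (U : C) :
    U ◁ f.f ≫ (Y.2.β U).inv = (X.2.β U).inv ≫ f.f ▷ U := by
  rw [Iso.eq_inv_comp, ← f.comm_assoc, Iso.hom_inv_id, Category.comp_id]

namespace CategoryTheory.HalfBraiding

variable {A : C} (β : HalfBraiding A)

lemma inv_naturality {U U' : C} (f : U ⟶ U') :
    f ▷ A ≫ (β.β U').inv = (β.β U).inv ≫ A ◁ f := by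
  rw [Iso.eq_inv_comp, ← β.naturality_assoc, Iso.hom_inv_id, Category.comp_id]

lemma inv_monoidal (U U' : C) :
    (β.β (U ⊗ U')).inv =
      (α_ U U' A).hom ≫ U ◁ (β.β U').inv ≫ (α_ U A U').inv ≫ (β.β U).inv ▷ U' ≫
        (α_ A U U').hom := by
  rw [← cancel_epi (β.β (U ⊗ U')).hom, Iso.hom_inv_id, β.monoidal]
  simp

lemma inv_tensorUnit : (β.β (𝟙_ C)).inv = (λ_ A).hom ≫ (ρ_ A).inv := by
  -- `Z(C)` is braided, and any braiding is compatible with the unitors.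
  have h : (β.β (𝟙_ C)).hom ≫ (λ_ A).hom = (ρ_ A).hom :=
    congrArg Center.Hom.f (braiding_leftUnitor (C := Center C) ⟨A, β⟩)
  exact Iso.inv_ext (by rw [← Category.assoc, h, Iso.hom_inv_id])

variable (B : Mon C) {ηA : 𝟙_ C ⟶ A} {μA : A ⊗ A ⟶ A}

def tensorMul (μA : A ⊗ A ⟶ A) : (A ⊗ B.X) ⊗ (A ⊗ B.X) ⟶ A ⊗ B.X :=
  𝟙 _ ⊗≫ A ◁ ((β.β B.X).inv ▷ B.X) ⊗≫ (μA ⊗ₘ μ[B.X])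

lemma tensorMul_one_mul (hA : ηA ▷ A ≫ μA = (λ_ A).hom) :
    ((λ_ (𝟙_ C)).inv ≫ (ηA ⊗ₘ η[B.X])) ▷ (A ⊗ B.X) ≫ β.tensorMul B μA =
      (λ_ (A ⊗ B.X)).hom := by
  calc
    _ = 𝟙 _ ⊗≫ ηA ▷ (A ⊗ B.X) ⊗≫ A ◁ ((η[B.X] ▷ A ≫ (β.β B.X).inv) ▷ B.X) ⊗≫
          (μA ⊗ₘ μ[B.X]) := by
        rw [tensorMul, MonoidalCategory.tensorHom_def ηA]; monoidal
    _ = 𝟙 _ ⊗≫ ηA ▷ (A ⊗ B.X) ⊗≫ ((A ⊗ A) ◁ (η[B.X] ▷ B.X) ≫ μA ▷ (B.X ⊗ B.X)) ⊗≫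
          A ◁ μ[B.X] := by
        rw [β.inv_naturality, β.inv_tensorUnit, MonoidalCategory.tensorHom_def μA]; monoidal
    _ = 𝟙 _ ⊗≫ (ηA ▷ A ≫ μA) ▷ B.X ⊗≫ A ◁ (η[B.X] ▷ B.X ≫ μ[B.X]) := by
        rw [whisker_exchange]; monoidal
    _ = (λ_ (A ⊗ B.X)).hom := by rw [hA, MonObj.one_mul]; monoidal

lemma tensorMul_mul_one
    (hη : B.X ◁ ηA ≫ (β.β B.X).inv = (ρ_ B.X).hom ≫ (λ_ B.X).inv ≫ ηA ▷ B.X)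
    (hA : A ◁ ηA ≫ μA = (ρ_ A).hom) :
    (A ⊗ B.X) ◁ ((λ_ (𝟙_ C)).inv ≫ (ηA ⊗ₘ η[B.X])) ≫ β.tensorMul B μA =
      (ρ_ (A ⊗ B.X)).hom := by
  calc
    _ = 𝟙 _ ⊗≫ A ◁ (B.X ◁ ηA) ⊗≫
          ((A ⊗ B.X ⊗ A) ◁ η[B.X] ≫ (A ◁ (β.β B.X).inv) ▷ B.X) ⊗≫ (μA ⊗ₘ μ[B.X]) := by
        rw [tensorMul, MonoidalCategory.tensorHom_def ηA]; monoidal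
    _ = 𝟙 _ ⊗≫ A ◁ (B.X ◁ ηA ≫ (β.β B.X).inv) ⊗≫ (A ⊗ A ⊗ B.X) ◁ η[B.X] ⊗≫
          (μA ⊗ₘ μ[B.X]) := by
        rw [whisker_exchange]; monoidal
    _ = 𝟙 _ ⊗≫ A ◁ (ηA ▷ B.X) ⊗≫ ((A ⊗ A) ◁ (B.X ◁ η[B.X]) ≫ μA ▷ (B.X ⊗ B.X)) ⊗≫
          A ◁ μ[B.X] := by
        rw [hη, MonoidalCategory.tensorHom_def μA]; monoidal
    _ = 𝟙 _ ⊗≫ (A ◁ ηA ≫ μA) ▷ B.X ⊗≫ A ◁ (B.X ◁ η[B.X] ≫ μ[B.X]) := by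
        rw [whisker_exchange]; monoidal
    _ = (ρ_ (A ⊗ B.X)).hom := by rw [hA, MonObj.mul_one]; monoidal

lemma tensorMul_whiskerRight_tensorMul :
    β.tensorMul B μA ▷ (A ⊗ B.X) ≫ β.tensorMul B μA =
      𝟙 _ ⊗≫ A ◁ ((β.β B.X).inv ▷ (B.X ⊗ A ⊗ B.X)) ⊗≫
        (A ⊗ A ⊗ B.X) ◁ ((β.β B.X).inv ▷ B.X) ⊗≫
        (A ⊗ A) ◁ ((β.β B.X).inv ▷ (B.X ⊗ B.X)) ⊗≫
        (μA ▷ A ≫ μA) ▷ (B.X ⊗ B.X ⊗ B.X) ⊗≫ A ◁ (μ[B.X] ▷ B.X ≫ μ[B.X]) ⊗≫ 𝟙 _ := by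
  calc
    _ = 𝟙 _ ⊗≫ A ◁ ((β.β B.X).inv ▷ (B.X ⊗ A ⊗ B.X)) ⊗≫ μA ▷ ((B.X ⊗ B.X) ⊗ A ⊗ B.X) ⊗≫
          A ◁ ((μ[B.X] ▷ A ≫ (β.β B.X).inv) ▷ B.X) ⊗≫
          μA ▷ (B.X ⊗ B.X) ⊗≫ A ◁ μ[B.X] ⊗≫ 𝟙 _ := by
        rw [tensorMul, MonoidalCategory.tensorHom_def μA]; monoidal
    _ = 𝟙 _ ⊗≫ A ◁ ((β.β B.X).inv ▷ (B.X ⊗ A ⊗ B.X)) ⊗≫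
          (μA ▷ (((B.X ⊗ B.X) ⊗ A) ⊗ B.X) ≫ A ◁ ((β.β (B.X ⊗ B.X)).inv ▷ B.X)) ⊗≫
          A ◁ ((A ◁ μ[B.X]) ▷ B.X) ⊗≫ μA ▷ (B.X ⊗ B.X) ⊗≫ A ◁ μ[B.X] ⊗≫ 𝟙 _ := by
        rw [β.inv_naturality]; monoidal
    _ = 𝟙 _ ⊗≫ A ◁ ((β.β B.X).inv ▷ (B.X ⊗ A ⊗ B.X)) ⊗≫
          (A ⊗ A) ◁ ((β.β (B.X ⊗ B.X)).inv ▷ B.X) ⊗≫ μA ▷ ((A ⊗ (B.X ⊗ B.X)) ⊗ B.X) ⊗≫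
          ((A ⊗ A) ◁ (μ[B.X] ▷ B.X) ≫ μA ▷ (B.X ⊗ B.X)) ⊗≫ A ◁ μ[B.X] ⊗≫ 𝟙 _ := by
        rw [← whisker_exchange μA]; monoidal
    _ = 𝟙 _ ⊗≫ A ◁ ((β.β B.X).inv ▷ (B.X ⊗ A ⊗ B.X)) ⊗≫
          (A ⊗ A) ◁ ((β.β (B.X ⊗ B.X)).inv ▷ B.X) ⊗≫
          (μA ▷ A ≫ μA) ▷ ((B.X ⊗ B.X) ⊗ B.X) ⊗≫ A ◁ (μ[B.X] ▷ B.X ≫ μ[B.X]) ⊗≫ 𝟙 _ := by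
        rw [whisker_exchange]; monoidal
    _ = _ := by rw [β.inv_monoidal]; monoidal

lemma associator_whiskerLeft_tensorMul_tensorMul
    (hμ : B.X ◁ μA ≫ (β.β B.X).inv = (α_ B.X A A).inv ≫ (β.β B.X).inv ▷ A ≫
      (α_ A B.X A).hom ≫ A ◁ (β.β B.X).inv ≫ (α_ A A B.X).inv ≫ μA ▷ B.X) :
    (α_ (A ⊗ B.X) (A ⊗ B.X) (A ⊗ B.X)).hom ≫ (A ⊗ B.X) ◁ β.tensorMul B μA ≫
        β.tensorMul B μA =
      𝟙 _ ⊗≫ A ◁ ((β.β B.X).inv ▷ (B.X ⊗ A ⊗ B.X)) ⊗≫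
        (A ⊗ A ⊗ B.X) ◁ ((β.β B.X).inv ▷ B.X) ⊗≫
        (A ⊗ A) ◁ ((β.β B.X).inv ▷ (B.X ⊗ B.X)) ⊗≫
        (A ◁ μA ≫ μA) ▷ (B.X ⊗ B.X ⊗ B.X) ⊗≫ A ◁ (B.X ◁ μ[B.X] ≫ μ[B.X]) ⊗≫ 𝟙 _ := by
  calc
    _ = 𝟙 _ ⊗≫ (A ⊗ B.X) ◁ (A ◁ ((β.β B.X).inv ▷ B.X)) ⊗≫ (A ⊗ B.X) ◁ (μA ▷ (B.X ⊗ B.X)) ⊗≫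
          A ◁ ((B.X ⊗ A) ◁ μ[B.X] ≫ (β.β B.X).inv ▷ B.X) ⊗≫
          μA ▷ (B.X ⊗ B.X) ⊗≫ A ◁ μ[B.X] ⊗≫ 𝟙 _ := by
        rw [tensorMul, MonoidalCategory.tensorHom_def μA]; monoidal
    _ = 𝟙 _ ⊗≫ (A ⊗ B.X) ◁ (A ◁ ((β.β B.X).inv ▷ B.X)) ⊗≫
          A ◁ ((B.X ◁ μA ≫ (β.β B.X).inv) ▷ (B.X ⊗ B.X)) ⊗≫ (A ⊗ A ⊗ B.X) ◁ μ[B.X] ⊗≫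
          μA ▷ (B.X ⊗ B.X) ⊗≫ A ◁ μ[B.X] ⊗≫ 𝟙 _ := by
        rw [whisker_exchange (β.β B.X).inv μ[B.X]]; monoidal
    _ = 𝟙 _ ⊗≫ ((A ⊗ B.X ⊗ A) ◁ ((β.β B.X).inv ▷ B.X) ≫
            (A ◁ (β.β B.X).inv) ▷ ((A ⊗ B.X) ⊗ B.X)) ⊗≫
          (A ⊗ A) ◁ ((β.β B.X).inv ▷ (B.X ⊗ B.X)) ⊗≫ A ◁ (μA ▷ (B.X ⊗ B.X ⊗ B.X)) ⊗≫
          (A ⊗ A ⊗ B.X) ◁ μ[B.X] ⊗≫ μA ▷ (B.X ⊗ B.X) ⊗≫ A ◁ μ[B.X] ⊗≫ 𝟙 _ := by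
        rw [hμ]; monoidal
    _ = 𝟙 _ ⊗≫ A ◁ ((β.β B.X).inv ▷ (B.X ⊗ A ⊗ B.X)) ⊗≫
          (A ⊗ A ⊗ B.X) ◁ ((β.β B.X).inv ▷ B.X) ⊗≫
          (A ⊗ A) ◁ ((β.β B.X).inv ▷ (B.X ⊗ B.X)) ⊗≫ A ◁ (μA ▷ (B.X ⊗ B.X ⊗ B.X)) ⊗≫
          ((A ⊗ A) ◁ (B.X ◁ μ[B.X]) ≫ μA ▷ (B.X ⊗ B.X)) ⊗≫ A ◁ μ[B.X] ⊗≫ 𝟙 _ := by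
        rw [whisker_exchange]; monoidal
    _ = _ := by rw [whisker_exchange μA]; monoidal

lemma tensorMul_assoc
    (hμ : B.X ◁ μA ≫ (β.β B.X).inv = (α_ B.X A A).inv ≫ (β.β B.X).inv ▷ A ≫
      (α_ A B.X A).hom ≫ A ◁ (β.β B.X).inv ≫ (α_ A A B.X).inv ≫ μA ▷ B.X)
    (hA : μA ▷ A ≫ μA = (α_ A A A).hom ≫ A ◁ μA ≫ μA) :
    β.tensorMul B μA ▷ (A ⊗ B.X) ≫ β.tensorMul B μA =
      (α_ (A ⊗ B.X) (A ⊗ B.X) (A ⊗ B.X)).hom ≫ (A ⊗ B.X) ◁ β.tensorMul B μA ≫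
        β.tensorMul B μA := by
  rw [tensorMul_whiskerRight_tensorMul, associator_whiskerLeft_tensorMul_tensorMul β B hμ, hA,
    MonObj.mul_assoc]
  monoidal

end CategoryTheory.HalfBraiding

lemma braidedTensorMul_eq_tensorMul (M : Mon (Center C)) (B : Mon C) :
    braidedTensorMul M B = M.X.2.tensorMul B μ[M.X].f := by
  dsimp only [braidedTensorMul, HalfBraiding.tensorMul]; monoidal

/-- If `(A, β)` is a monoid object in the Drinfeld center `Z(C)` of a monoidal
category `C` and `B` is a monoid object in `C`, then `A ⊗ B` with the multiplication
`(μ_A ⊗ μ_B) ∘ (id_A ⊗ (β_B)⁻¹ ⊗ id_B)` (up to associators) and unit `η_A ⊗ η_B` (up to a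
unitor) is a monoid object in `C`: the unit axioms and associativity hold. -/
theorem braidedTensor_isMonoid (M : Mon (Center C)) (B : Mon C) :
    ((braidedTensorOne M B ▷ (M.X.1 ⊗ B.X)) ≫ braidedTensorMul M B
        = (λ_ (M.X.1 ⊗ B.X)).hom) ∧
    (((M.X.1 ⊗ B.X) ◁ braidedTensorOne M B) ≫ braidedTensorMul M B
        = (ρ_ (M.X.1 ⊗ B.X)).hom) ∧
    ((braidedTensorMul M B ▷ (M.X.1 ⊗ B.X)) ≫ braidedTensorMul M B
        = (α_ (M.X.1 ⊗ B.X) (M.X.1 ⊗ B.X) (M.X.1 ⊗ B.X)).hom ≫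
            ((M.X.1 ⊗ B.X) ◁ braidedTensorMul M B) ≫ braidedTensorMul M B) := by
  have hη : B.X ◁ η[M.X].f ≫ (M.X.2.β B.X).inv =
      (ρ_ B.X).hom ≫ (λ_ B.X).inv ≫ η[M.X].f ▷ B.X :=
    (Center.Hom.comm_inv η[M.X] B.X).trans (Category.assoc _ _ _)
  have hμ : B.X ◁ μ[M.X].f ≫ (M.X.2.β B.X).inv =
      (α_ B.X M.X.1 M.X.1).inv ≫ (M.X.2.β B.X).inv ▷ M.X.1 ≫ (α_ M.X.1 B.X M.X.1).hom ≫
        M.X.1 ◁ (M.X.2.β B.X).inv ≫ (α_ M.X.1 M.X.1 B.X).inv ≫ μ[M.X].f ▷ B.X := by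
    simpa using Center.Hom.comm_inv μ[M.X] B.X
  rw [braidedTensorMul_eq_tensorMul]
  exact ⟨M.X.2.tensorMul_one_mul B (congrArg Center.Hom.f (MonObj.one_mul M.X)),
    M.X.2.tensorMul_mul_one B hη (congrArg Center.Hom.f (MonObj.mul_one M.X)),
    M.X.2.tensorMul_assoc B hμ (congrArg Center.Hom.f (MonObj.mul_assoc M.X))⟩

end
end

section
/- Let A be a unital complex *-algebra, let q be a nonzero real number, and let α, γ ∈ A satisfy αγ = qγα, αγ* = qγ*α, γγ* = γ*γ, α*α + γ*γ = 1 and αα* + q²γγ* = 1. Then the elements α' = α ⊗ α − q γ* ⊗ γ and γ' = γ ⊗ α + α* ⊗ γ of the *-algebra A ⊗ A satisfy the same five relations: α'γ' = qγ'α', α'(γ')* = q(γ')*α', γ'(γ')* = (γ')*γ', (α')*α' + (γ')*γ' = 1, and α'(α')* + q²γ'(γ')* = 1. (This is the well-definedness of the comultiplication of SU_q(2) on the generators.) -/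
/-!
Expand both sides in `A ⊗ A` with `(a ⊗ b)(c ⊗ d) = ac ⊗ bd`. Rewriting every product of
generators with the `q`-commutation relations and their adjoints `γ*α* = q α*γ*`,
`γα* = q α*γ`, and eliminating `α*α` and `αα*` by the last two relations, brings each side to
a normal form in which the two sides agree as `ℂ`-linear combinations of elementary tensors.
-/

open scoped TensorProduct

theorem star_ofReal_smul {M : Type*} [AddCommMonoid M] [StarAddMonoid M] [Module ℂ M]
    [StarModule ℂ M] (r : ℝ) (x : M) : star ((r : ℂ) • x) = (r : ℂ) • star x := by
  rw [star_smul, Complex.star_def, Complex.conj_ofReal]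

structure SUq2Relations {A : Type*} [Ring A] [Algebra ℂ A] [StarRing A] (q : ℝ) (α γ : A) :
    Prop where
  α_mul_γ : α * γ = (q : ℂ) • (γ * α)
  α_mul_star_γ : α * star γ = (q : ℂ) • (star γ * α)
  γ_mul_star_γ : γ * star γ = star γ * γ
  star_α_mul_α_add : star α * α + star γ * γ = 1
  α_mul_star_α_add : α * star α + ((q : ℂ) ^ 2) • (γ * star γ) = 1

namespace SUq2Relations

variable {A : Type*} [Ring A] [Algebra ℂ A] [StarRing A] [StarModule ℂ A] {q : ℝ} {α γ : A}

theorem star_γ_mul_star_α (h : SUq2Relations q α γ) :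
    star γ * star α = (q : ℂ) • (star α * star γ) := by
  simpa only [star_mul, star_ofReal_smul] using congrArg star h.α_mul_γ

theorem γ_mul_star_α (h : SUq2Relations q α γ) :
    γ * star α = (q : ℂ) • (star α * γ) := by
  simpa only [star_mul, star_ofReal_smul, star_star] using congrArg star h.α_mul_star_γ

/-- The matrix coproduct of the fundamental corepresentation `[[α, -q γ*], [γ, α*]]`. -/
theorem comul (h : SUq2Relations q α γ) :
    SUq2Relations q (α ⊗ₜ[ℂ] α - (q : ℂ) • (star γ ⊗ₜ[ℂ] γ))
      (γ ⊗ₜ[ℂ] α + star α ⊗ₜ[ℂ] γ) := by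
  have star_α' : star (α ⊗ₜ[ℂ] α - (q : ℂ) • (star γ ⊗ₜ[ℂ] γ)) =
      star α ⊗ₜ[ℂ] star α - (q : ℂ) • (γ ⊗ₜ[ℂ] star γ) := by
    rw [star_sub, star_ofReal_smul, TensorProduct.star_tmul, TensorProduct.star_tmul, star_star]
  have star_γ' : star (γ ⊗ₜ[ℂ] α + star α ⊗ₜ[ℂ] γ) = star γ ⊗ₜ[ℂ] star α + α ⊗ₜ[ℂ] star γ := by
    rw [star_add, TensorProduct.star_tmul, TensorProduct.star_tmul, star_star]
  have star_α_mul_α : star α * α = 1 - star γ * γ := eq_sub_of_add_eq h.star_α_mul_α_add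
  have α_mul_star_α : α * star α = 1 - ((q : ℂ) ^ 2) • (γ * star γ) :=
    eq_sub_of_add_eq h.α_mul_star_α_add
  constructor <;>
  · simp only [star_α', star_γ', mul_sub, sub_mul, mul_add, add_mul, smul_mul_assoc,
      mul_smul_comm, Algebra.TensorProduct.tmul_mul_tmul, h.α_mul_γ, h.α_mul_star_γ,
      h.γ_mul_star_γ, h.star_γ_mul_star_α, h.γ_mul_star_α, star_α_mul_α, α_mul_star_α,
      TensorProduct.tmul_sub, TensorProduct.sub_tmul, TensorProduct.tmul_smul,
      ← TensorProduct.smul_tmul', smul_sub, smul_add, smul_smul, Algebra.TensorProduct.one_def]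
    module

end SUq2Relations

theorem suq2_comultiplication_well_defined_general {A : Type*} [Ring A] [Algebra ℂ A]
    [StarRing A] [StarModule ℂ A]
    (q : ℝ) (α γ : A)
    (h1 : α * γ = (q : ℂ) • (γ * α))
    (h2 : α * star γ = (q : ℂ) • (star γ * α))
    (h3 : γ * star γ = star γ * γ)
    (h4 : star α * α + star γ * γ = 1)
    (h5 : α * star α + ((q : ℂ) ^ 2) • (γ * star γ) = 1)
    (α' γ' : A ⊗[ℂ] A)
    (hα' : α' = α ⊗ₜ[ℂ] α - (q : ℂ) • (star γ ⊗ₜ[ℂ] γ))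
    (hγ' : γ' = γ ⊗ₜ[ℂ] α + star α ⊗ₜ[ℂ] γ) :
    α' * γ' = (q : ℂ) • (γ' * α') ∧
    α' * star γ' = (q : ℂ) • (star γ' * α') ∧
    γ' * star γ' = star γ' * γ' ∧
    star α' * α' + star γ' * γ' = 1 ∧
    α' * star α' + ((q : ℂ) ^ 2) • (γ' * star γ') = 1 := by
  subst hα' hγ'
  have h := SUq2Relations.comul ⟨h1, h2, h3, h4, h5⟩
  exact ⟨h.1, h.2, h.3, h.4, h.5⟩

/-- If `α, γ` in a unital complex *-algebra `A` satisfy the defining relations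
of `SU_q(2)`, then `α' = α ⊗ α - q γ* ⊗ γ` and `γ' = γ ⊗ α + α* ⊗ γ` in the *-algebra
`A ⊗ A` satisfy the same five relations (well-definedness of the comultiplication on
generators).  The *-structure on `A ⊗[ℂ] A` is the one determined by
`(a ⊗ b)* = a* ⊗ b*`. -/
theorem suq2_comultiplication_well_defined {A : Type*} [Ring A] [Algebra ℂ A]
    [StarRing A] [StarModule ℂ A]
    [StarRing (A ⊗[ℂ] A)]
    (hstar : ∀ x y : A, star (x ⊗ₜ[ℂ] y) = star x ⊗ₜ[ℂ] star y)
    (q : ℝ) (hq : q ≠ 0) (α γ : A)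
    (h1 : α * γ = (q : ℂ) • (γ * α))
    (h2 : α * star γ = (q : ℂ) • (star γ * α))
    (h3 : γ * star γ = star γ * γ)
    (h4 : star α * α + star γ * γ = 1)
    (h5 : α * star α + ((q : ℂ) ^ 2) • (γ * star γ) = 1)
    (α' γ' : A ⊗[ℂ] A)
    (hα' : α' = α ⊗ₜ[ℂ] α - (q : ℂ) • (star γ ⊗ₜ[ℂ] γ))
    (hγ' : γ' = γ ⊗ₜ[ℂ] α + star α ⊗ₜ[ℂ] γ) :
    α' * γ' = (q : ℂ) • (γ' * α') ∧
    α' * star γ' = (q : ℂ) • (star γ' * α') ∧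
    γ' * star γ' = star γ' * γ' ∧
    star α' * α' + star γ' * γ' = 1 ∧
    α' * star α' + ((q : ℂ) ^ 2) • (γ' * star γ') = 1 :=
  suq2_comultiplication_well_defined_general q α γ h1 h2 h3 h4 h5 α' γ' hα' hγ'
end

section
/- Let B be a unital complex *-algebra, let n ≥ 1, and let u^{kl}_{ij} ∈ B for 1 ≤ i, j, k, l ≤ n. Let λ : M_n(ℂ) → B ⊗ M_n(ℂ) be the linear map determined by λ(e_{ij}) = Σ_{k,l=1}^n u^{kl}_{ij} ⊗ e_{kl}. Then λ is a unital *-algebra homomorphism satisfying (id ⊗ τ)(λ(x)) = τ(x)·1_B for all x ∈ M_n(ℂ) if and only if the following relations hold for all indices: Σ_{p=1}^n u^{kp}_{ij} u^{pl}_{rs} = δ_{jr} u^{kl}_{is}, (u^{kl}_{ij})* = u^{lk}_{ji}, Σ_{p=1}^n u^{kl}_{pp} = δ_{kl}, and Σ_{p=1}^n u^{pp}_{kl} = δ_{kl}. -/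
/-!
Identify `B ⊗ M_n(ℂ)` with `M_n(B)` via `matrixEquivTensor`. Then `λ` becomes a linear map
`Λ : M_n(ℂ) → M_n(B)` with `Λ(e_ij) = (u^{kl}_{ij})_{kl}`, and `id ⊗ τ` becomes `(1/n)·trace`.
Multiplicativity, unitality, the star condition and trace preservation are all (bi)linear or
conjugate-linear conditions in `x`, so each may be checked on matrix units, where they become
`Λ(e_ij) Λ(e_rs) = δ_jr Λ(e_is)`, `Σ_p Λ(e_pp) = 1`, `Λ(e_ij)* = Λ(e_ji)` and
`tr Λ(e_ij) = δ_ij`; read entrywise in `M_n(B)` these are the four relations.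
-/

open scoped TensorProduct

/-- The normalized trace `τ(x) = (1/n) · tr(x)` on `n × n` complex matrices. -/
noncomputable def normalizedTrace (n : ℕ) : Matrix (Fin n) (Fin n) ℂ →ₗ[ℂ] ℂ :=
  ((n : ℂ)⁻¹) • Matrix.traceLinearMap (Fin n) ℂ ℂ

namespace Matrix

variable {m R A : Type*} [Fintype m] [DecidableEq m]

theorem ext_linearMap_iff_single {n : Type*} [Fintype n] [DecidableEq n] [Semiring R]
    [AddCommMonoid A] [Module R A]
    {f g : Matrix m n R →ₗ[R] A} : f = g ↔ ∀ i j, f (single i j 1) = g (single i j 1) :=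
  ⟨fun h _ _ => h ▸ rfl, fun h => ext_linearMap R fun i j => LinearMap.ext_ring (h i j)⟩

theorem single_one_mul_single_one [Semiring R] (i j r s : m) :
    (single i j 1 : Matrix m m R) * single r s 1 = if j = r then single i s 1 else 0 := by
  split_ifs with h
  · rw [h, single_mul_single_same, mul_one]
  · exact single_mul_single_of_ne (h := h) ..

theorem linearMap_apply_one [Semiring R] [AddCommMonoid A] [Module R A]
    (f : Matrix m m R →ₗ[R] A) : f 1 = ∑ p, f (single p p 1) := by
  rw [← map_sum, sum_single_one]

theorem linearMap_map_mul_iff_single [CommSemiring R] [Semiring A] [Algebra R A]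
    (f : Matrix m m R →ₗ[R] A) :
    (∀ x y, f (x * y) = f x * f y) ↔
      ∀ i j r s, f (single i j 1) * f (single r s 1) = if j = r then f (single i s 1) else 0 := by
  have bilinear : (∀ x y, f (x * y) = f x * f y) ↔
      (LinearMap.mul R _).compr₂ f = (LinearMap.mul R A).compl₁₂ f f := by
    simp [LinearMap.ext_iff]
  simp_rw [bilinear, ext_linearMap_iff_single]
  simp [single_one_mul_single_one, apply_ite f, eq_comm]

/-- `x ↦ star (f (star x))` is again linear (the intrinsic star of `f`), so the condition is
an equality of linear maps. -/
theorem linearMap_map_star_iff_single [CommSemiring R] [StarRing R] [AddCommMonoid A]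
    [Module R A] [StarAddMonoid A] [StarModule R A] (f : Matrix m m R →ₗ[R] A) :
    (∀ x, f (star x) = star (f x)) ↔ ∀ i j, star (f (single i j 1)) = f (single j i 1) := by
  calc (∀ x, f (star x) = star (f x)) ↔ star (WithConv.toConv f) = WithConv.toConv f :=
        (LinearMap.IntrinsicStar.isSelfAdjoint_iff_map_star _).symm
    _ ↔ ∀ i j, star (f (star (single i j 1))) = f (single i j 1) := by
        rw [WithConv.ext_iff, ext_linearMap_iff_single]; rfl
    _ ↔ ∀ i j, star (f (single j i 1)) = f (single i j 1) := by simp [star_eq_conjTranspose]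
    _ ↔ _ := forall_comm

theorem linearMap_trace_eq_iff_single {n : Type*} [Fintype n] [CommSemiring R] [Semiring A]
    [Algebra R A]
    (f : Matrix m m R →ₗ[R] Matrix n n A) :
    (∀ x, trace (f x) = algebraMap R A (trace x)) ↔
      ∀ i j, trace (f (single i j 1)) = if i = j then 1 else 0 := by
  have := ext_linearMap_iff_single (f := traceLinearMap n R A ∘ₗ f)
    (g := Algebra.linearMap R A ∘ₗ traceLinearMap m R R)
  simp only [LinearMap.ext_iff, LinearMap.comp_apply, traceLinearMap_apply,
    Algebra.linearMap_apply] at this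
  rw [this]
  refine forall₂_congr fun i j => ?_
  rcases eq_or_ne i j with rfl | h
  · simp
  · simp [h]

end Matrix

open Matrix

section MatrixEquivTensor

variable {m R A : Type*} [Fintype m] [DecidableEq m] [CommSemiring R] [Semiring A] [Algebra R A]

theorem star_matrixEquivTensor [StarRing R] [StarRing A] [StarAddMonoid (A ⊗[R] Matrix m m R)]
    (hstar : ∀ (a : A) (x : Matrix m m R), star (a ⊗ₜ[R] x) = star a ⊗ₜ[R] star x)
    (M : Matrix m m A) : star (matrixEquivTensor m R A M) = matrixEquivTensor m R A (star M) := by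
  induction M using Matrix.induction_on' with
  | h_zero => simp
  | h_add p q hp hq => simp only [map_add, star_add, hp, hq]
  | h_std_basis i j a => simp [hstar, star_eq_conjTranspose]

theorem rid_map_traceLinearMap_matrixEquivTensor (M : Matrix m m A) :
    TensorProduct.rid R A (TensorProduct.map LinearMap.id (traceLinearMap m R R)
      (matrixEquivTensor m R A M)) = trace M := by
  induction M using Matrix.induction_on' with
  | h_zero => simp
  | h_add p q hp hq => simp only [map_add, trace_add, hp, hq]
  | h_std_basis i j a => by_cases h : i = j <;> simp [h]

end MatrixEquivTensor

section NormalizedTrace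

variable {B : Type*} [Semiring B] [Algebra ℂ B] {n : ℕ}

theorem rid_map_normalizedTrace_matrixEquivTensor (M : Matrix (Fin n) (Fin n) B) :
    TensorProduct.rid ℂ B (TensorProduct.map LinearMap.id (normalizedTrace n)
      (matrixEquivTensor (Fin n) ℂ B M)) = (n : ℂ)⁻¹ • trace M := by
  rw [normalizedTrace, TensorProduct.map_smul_right, LinearMap.smul_apply, map_smul,
    rid_map_traceLinearMap_matrixEquivTensor]

theorem algebraMap_normalizedTrace (x : Matrix (Fin n) (Fin n) ℂ) :
    algebraMap ℂ B (normalizedTrace n x) = (n : ℂ)⁻¹ • algebraMap ℂ B (trace x) := by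
  simp [normalizedTrace, Algebra.smul_def]

end NormalizedTrace

/-- For elements `u^{kl}_{ij}` of a unital complex *-algebra `B`, the linear
map `λ : M_n(ℂ) → B ⊗ M_n(ℂ)` determined by `λ(e_ij) = Σ_{k,l} u^{kl}_{ij} ⊗ e_kl` is a
unital *-algebra homomorphism preserving the normalized trace (`(id ⊗ τ)(λ(x)) = τ(x)·1_B`)
if and only if the defining relations of Wang's quantum automorphism group hold.
Here `u k l i j` denotes `u^{kl}_{ij}`, and the *-structure on the tensor product is
determined by `(b ⊗ m)* = b* ⊗ m*`. -/
theorem quantum_automorphism_relations_iff {B : Type*} [Ring B] [Algebra ℂ B]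
    [StarRing B] [StarModule ℂ B] (n : ℕ) (hn : 1 ≤ n)
    (u : Fin n → Fin n → Fin n → Fin n → B)
    [StarRing (B ⊗[ℂ] Matrix (Fin n) (Fin n) ℂ)]
    (hstar : ∀ (b : B) (m : Matrix (Fin n) (Fin n) ℂ),
      star (b ⊗ₜ[ℂ] m) = star b ⊗ₜ[ℂ] star m)
    (lam : Matrix (Fin n) (Fin n) ℂ →ₗ[ℂ] B ⊗[ℂ] Matrix (Fin n) (Fin n) ℂ)
    (hlam : ∀ i j : Fin n, lam (Matrix.single i j 1) =
      ∑ k : Fin n, ∑ l : Fin n, u k l i j ⊗ₜ[ℂ] Matrix.single k l 1) :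
    ((∀ x y : Matrix (Fin n) (Fin n) ℂ, lam (x * y) = lam x * lam y) ∧
     lam 1 = 1 ∧
     (∀ x : Matrix (Fin n) (Fin n) ℂ, lam (star x) = star (lam x)) ∧
     (∀ x : Matrix (Fin n) (Fin n) ℂ,
       TensorProduct.rid ℂ B
         (TensorProduct.map (LinearMap.id : B →ₗ[ℂ] B) (normalizedTrace n) (lam x)) =
       algebraMap ℂ B (normalizedTrace n x)))
    ↔
    ((∀ i j k l r s : Fin n,
        ∑ p : Fin n, u k p i j * u p l r s = if j = r then u k l i s else 0) ∧
     (∀ i j k l : Fin n, star (u k l i j) = u l k j i) ∧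
     (∀ k l : Fin n, ∑ p : Fin n, u k l p p = if k = l then 1 else 0) ∧
     (∀ k l : Fin n, ∑ p : Fin n, u p p k l = if k = l then 1 else 0)) := by
  let Λ := (matrixEquivTensor (Fin n) ℂ B).symm.toLinearMap ∘ₗ lam
  have lam_eq (x) : lam x = matrixEquivTensor (Fin n) ℂ B (Λ x) :=
    (AlgEquiv.apply_symm_apply _ _).symm
  have Λ_single (i j) : Λ (single i j 1) = of fun k l => u k l i j := by
    simp [Λ, hlam, sum_sum_single]
  have hn_inv : (n : ℂ)⁻¹ ≠ 0 := inv_ne_zero (Nat.cast_ne_zero.mpr (by omega))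
  simp only [lam_eq, ← map_mul, ← map_one (matrixEquivTensor (Fin n) ℂ B),
    EmbeddingLike.apply_eq_iff_eq, star_matrixEquivTensor hstar,
    rid_map_normalizedTrace_matrixEquivTensor, algebraMap_normalizedTrace, smul_right_inj hn_inv,
    linearMap_map_mul_iff_single, linearMap_apply_one, linearMap_map_star_iff_single,
    linearMap_trace_eq_iff_single, Λ_single]
  refine and_congr ?mul (and_left_comm.trans (and_congr ?star (and_congr ?unit ?trace)))
  case mul =>
    constructor
    · intro h i j k l r s
      simpa [mul_apply, apply_ite (fun M : Matrix (Fin n) (Fin n) B => M k l)]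
        using congr_fun₂ (h i j r s) k l
    · intro h i j r s
      ext k l
      simpa [mul_apply, apply_ite (fun M : Matrix (Fin n) (Fin n) B => M k l)]
        using h i j k l r s
  case star =>
    simp only [← Matrix.ext_iff, star_apply, of_apply]
    exact forall₂_congr fun _ _ => forall_comm
  case unit => simp [← Matrix.ext_iff, Matrix.sum_apply, one_apply]
  case trace => rfl
end
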